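/- Let g ∈ L²(ℝ), y ∈ ℝ, and define the translation (τ_y g)(t) = g(t - y). Then (W^M_ψ τ_y g)(a,b) = exp((iA/B) y(y-b)) (W^M_ψ (exp((iA/B)yt) g(t)))(a, b - y). -/

import Mathlib

open MeasureTheory Real Set
open scoped ComplexConjugate

/-- The LCT kernel K_M(t,ξ) = (2πiB)^{-1/2} exp((i/2)((A/B)t² - (2/B)ξt + (D/B)ξ²)). -/
noncomputable def lctKernel (A B D : ℝ) (t ξ : ℝ) : ℂ :=
  (2 * (Real.pi : ℂ) * Complex.I * (B : ℂ)) ^ (-(1/2 : ℂ)) *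
    Complex.exp ((Complex.I / 2) * ((A / B * t ^ 2 - 2 / B * ξ * t + D / B * ξ ^ 2 : ℝ) : ℂ))

/-- The linear canonical transform (B ≠ 0 case). -/
noncomputable def LCT (A B D : ℝ) (f : ℝ → ℂ) (ξ : ℝ) : ℂ :=
  ∫ t : ℝ, f t * lctKernel A B D t ξ

/-- The daughter wavelet ψ^M_{a,b}. -/
noncomputable def daughter (A B : ℝ) (ψ : ℝ → ℂ) (a b t : ℝ) : ℂ :=
  Complex.exp (Complex.I * ((-(A / (2 * B)) * ((t ^ 2 - b ^ 2) - a ^ 2 * (t - b) ^ 2) : ℝ) : ℂ)) *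
    (Real.sqrt a : ℂ) * ψ (a * (t - b))

/-- The linear canonical wavelet transform (W^M_ψ f)(a,b) = ⟨f, ψ^M_{a,b}⟩. -/
noncomputable def LCWT (A B : ℝ) (ψ f : ℝ → ℂ) (a b : ℝ) : ℂ :=
  ∫ t : ℝ, f t * conj (daughter A B ψ a b t)

/-- ψ is an admissible linear canonical wavelet with admissibility constant Cψ. -/
def IsALCW (A B D : ℝ) (ψ : ℝ → ℂ) (Cψ : ℝ) : Prop :=
  0 < Cψ ∧ ∀ ξ : ℝ, |ξ| = 1 →
    (∫ a in Set.Ioi (0 : ℝ), ‖LCT A B D ψ (ξ / a)‖ ^ 2 / a) = Cψ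

lemma LCWT_comp_sub_right (A B : ℝ) (ψ f : ℝ → ℂ) (a b y : ℝ) :
    LCWT A B ψ (fun t => f (t - y)) a b = ∫ t, f t * conj (daughter A B ψ a b (t + y)) := by
  rw [LCWT, ← integral_add_right_eq_self _ y]
  simp only [add_sub_cancel_right]

-- The `a²`-terms agree because `(t + y) - b = t - (b - y)`; the rest is linear in `t`.
lemma daughter_add_right (A B : ℝ) (ψ : ℝ → ℂ) (a b y t : ℝ) :
    daughter A B ψ a b (t + y) =
      Complex.exp (-(Complex.I * ((A / B * (y * (y - b)) : ℝ) : ℂ))) *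
        Complex.exp (-(Complex.I * ((A / B * y * t : ℝ) : ℂ))) * daughter A B ψ a (b - y) t := by
  have hphase : -(A / (2 * B)) * (((t + y) ^ 2 - b ^ 2) - a ^ 2 * (t + y - b) ^ 2) =
      -(A / B * (y * (y - b))) + -(A / B * y * t) +
        -(A / (2 * B)) * ((t ^ 2 - (b - y) ^ 2) - a ^ 2 * (t - (b - y)) ^ 2) := by
    ring
  rw [daughter, daughter, hphase, show t + y - b = t - (b - y) by ring]
  push_cast
  rw [mul_add, mul_add, Complex.exp_add, Complex.exp_add, mul_neg, mul_neg]
  ring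

theorem LCWT_translation_general (A B : ℝ) (ψ g : ℝ → ℂ) (y : ℝ) :
    ∀ a : ℝ, 0 < a → ∀ b : ℝ,
      LCWT A B ψ (fun t => g (t - y)) a b =
        Complex.exp (Complex.I * ((A / B * (y * (y - b)) : ℝ) : ℂ)) *
          LCWT A B ψ (fun t => Complex.exp (Complex.I * ((A / B * y * t : ℝ) : ℂ)) * g t)
            a (b - y) := by
  intro a _ b
  rw [LCWT_comp_sub_right, LCWT, ← integral_const_mul]
  congr 1 with t
  simp only [daughter_add_right, map_mul, ← Complex.exp_conj, map_neg, Complex.conj_I,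
    Complex.conj_ofReal, neg_mul, neg_neg]
  ring

theorem LCWT_translation (A B C D : ℝ) (hM : A * D - B * C = 1) (hB : B ≠ 0)
    (ψ g : ℝ → ℂ) (hg : MemLp g 2 (volume : Measure ℝ)) (y : ℝ) :
    ∀ a : ℝ, 0 < a → ∀ b : ℝ,
      LCWT A B ψ (fun t => g (t - y)) a b =
        Complex.exp (Complex.I * ((A / B * (y * (y - b)) : ℝ) : ℂ)) *
          LCWT A B ψ (fun t => Complex.exp (Complex.I * ((A / B * y * t : ℝ) : ℂ)) * g t)
            a (b - y) :=
  LCWT_translation_general A B ψ g y
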